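/- Let α ∈ ℝ and L : (0,∞) → (0,∞). If the series ∑_{i=1}^∞ L(i) i^α converges, then for the random polynomial Q_n as below, the sequence n ↦ p_{[0,1]}(n) is bounded away from zero: inf_{n≥1} p_{[0,1]}(n) > 0. -/

import Mathlib

open MeasureTheory ProbabilityTheory Filter Set

noncomputable section

/-- A real random variable is centered Gaussian if its law is `gaussianReal 0 v`
for some variance `v ≥ 0`. -/
def IsCenteredGaussian {Ω : Type*} [MeasurableSpace Ω] (μ : Measure Ω) (X : Ω → ℝ) : Prop :=
  ∃ v : NNReal, Measure.map X μ = gaussianReal 0 v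

/-- A centered Gaussian process: every finite linear combination of its values is a
centered Gaussian real random variable. -/
def IsCenteredGaussianProcess {Ω : Type*} [MeasurableSpace Ω] (μ : Measure Ω)
    {T : Type*} (Z : T → Ω → ℝ) : Prop :=
  ∀ (n : ℕ) (c : Fin n → ℝ) (t : Fin n → T),
    IsCenteredGaussian μ (fun ω => ∑ i, c i * Z (t i) ω)

/-- `L` is slowly varying at infinity: `L(λ x)/L(x) → 1` as `x → ∞` for each `λ > 0`. -/
def SlowlyVarying (L : ℝ → ℝ) : Prop :=
  ∀ lam : ℝ, 0 < lam → Tendsto (fun x => L (lam * x) / L x) atTop (nhds 1)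

/-- `b` is the persistence exponent of a centered stationary Gaussian process with
continuous sample paths and covariance `E[Y_s Y_t] = ρ (t - s)`, that is
`(1/T) log P(sup_{t ∈ [0,T]} Y_t ≤ 0) → -b` as `T → ∞`. -/
def IsPersistenceExponentOfCov (ρ : ℝ → ℝ) (b : ℝ) : Prop :=
  ∃ (Ω : Type) (_inst : MeasurableSpace Ω) (μ : Measure Ω) (Y : ℝ → Ω → ℝ),
    IsProbabilityMeasure μ ∧
    IsCenteredGaussianProcess μ Y ∧
    (∀ ω, Continuous fun t => Y t ω) ∧
    (∀ s t : ℝ, (∫ ω, Y s ω * Y t ω ∂μ) = ρ (t - s)) ∧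
    Tendsto (fun T : ℝ =>
        (1 / T) * Real.log ((μ {ω | ∀ u ∈ Icc (0:ℝ) T, Y u ω ≤ 0}).toReal))
      atTop (nhds (-b))

section AuxLemmas
open Real
open scoped NNReal ENNReal

lemma aux_tendsto_mul_exp (b : ℝ) (hb : 0 < b) :
    Tendsto (fun x : ℝ => x * rexp (-b * x ^ 2)) atTop (nhds 0) := by
  have h := tendsto_rpow_abs_mul_exp_neg_mul_sq_cocompact hb 1
  have hle : (atTop : Filter ℝ) ≤ cocompact ℝ := by
    rw [cocompact_eq_atBot_atTop]; exact le_sup_right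
  have h2 := h.mono_left hle
  refine h2.congr' ?_
  filter_upwards [eventually_ge_atTop (0:ℝ)] with x hx
  rw [abs_of_nonneg hx, Real.rpow_one]

lemma aux_integral_sq_exp_Ioi (b : ℝ) (hb : 0 < b) :
    ∫ x in Ioi (0:ℝ), x ^ 2 * rexp (-b * x ^ 2)
      = (2*b)⁻¹ * (Real.sqrt (π / b) / 2) := by
  have key : ∫ x in Ioi (0:ℝ),
      (x ^ 2 * rexp (-b * x ^ 2) - (2*b)⁻¹ * rexp (-b * x ^ 2)) = 0 - (-(2*b)⁻¹ * (0 * rexp (-b * 0 ^ 2))) := by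
    apply integral_Ioi_of_hasDerivAt_of_tendsto'
      (f := fun x => -(2*b)⁻¹ * (x * rexp (-b * x ^ 2)))
    · intro x _
      have h1 : HasDerivAt (fun x : ℝ => x * rexp (-b * x ^ 2))
          (1 * rexp (-b * x ^ 2) + x * (rexp (-b * x^2) * (-b * (2 * x ^ 1)))) x := by
        exact (hasDerivAt_id x).mul (((hasDerivAt_pow 2 x).const_mul (-b)).exp)
      have := h1.const_mul (-(2*b)⁻¹)
      refine this.congr_deriv ?_
      have hbb : (2*b)⁻¹ * (2*b) = 1 := inv_mul_cancel₀ (by positivity)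
      linear_combination (x ^ 2 * rexp (-b * x ^ 2)) * hbb
    · have h1 : Integrable (fun x : ℝ => x ^ 2 * rexp (-b * x ^ 2)) := by
        have := integrable_rpow_mul_exp_neg_mul_sq hb (s := 2) (by norm_num)
        refine this.congr (ae_of_all _ fun x => ?_)
        show x ^ (2:ℝ) * rexp (-b * x ^ 2) = _
        rw [show (2:ℝ) = ((2:ℕ):ℝ) by norm_num, Real.rpow_natCast]
      exact (h1.sub ((integrable_exp_neg_mul_sq hb).const_mul _)).integrableOn
    · have := (aux_tendsto_mul_exp b hb).const_mul (-(2*b)⁻¹)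
      simpa using this
  have hint1 : IntegrableOn (fun x : ℝ => x ^ 2 * rexp (-b * x ^ 2)) (Ioi 0) := by
    have := integrable_rpow_mul_exp_neg_mul_sq hb (s := 2) (by norm_num)
    refine (this.congr (ae_of_all _ fun x => ?_)).integrableOn
    show x ^ (2:ℝ) * rexp (-b * x ^ 2) = _
    rw [show (2:ℝ) = ((2:ℕ):ℝ) by norm_num, Real.rpow_natCast]
  have hint2 : IntegrableOn (fun x : ℝ => (2*b)⁻¹ * rexp (-b * x ^ 2)) (Ioi 0) :=
    ((integrable_exp_neg_mul_sq hb).const_mul _).integrableOn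
  rw [integral_sub hint1 hint2] at key
  have hg : ∫ x in Ioi (0:ℝ), (2*b)⁻¹ * rexp (-b * x ^ 2)
      = (2*b)⁻¹ * (Real.sqrt (π / b) / 2) := by
    rw [integral_const_mul, integral_gaussian_Ioi]
  simp only [mul_zero, zero_mul, neg_zero, sub_zero] at key
  linarith [key, hg]

lemma aux_integrable_sq_exp (b : ℝ) (hb : 0 < b) :
    Integrable (fun x : ℝ => x ^ 2 * rexp (-b * x ^ 2)) := by
  have h := integrable_rpow_mul_exp_neg_mul_sq hb (s := 2) (by norm_num)
  refine h.congr (ae_of_all _ fun x => ?_)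
  show x ^ (2:ℝ) * rexp (-b * x ^ 2) = _
  rw [show (2:ℝ) = ((2:ℕ):ℝ) by norm_num, Real.rpow_natCast]



lemma aux_integral_sq_exp (b : ℝ) (hb : 0 < b) :
    ∫ x : ℝ, x ^ 2 * rexp (-b * x ^ 2) = (2*b)⁻¹ * (Real.sqrt (π / b) / 2) * 2 := by
  have h1 : ∫ x : ℝ, x ^ 2 * rexp (-b * x ^ 2)
      = ∫ x : ℝ, |x| ^ 2 * rexp (-b * |x| ^ 2) := by
    congr 1; funext x; rw [sq_abs]
  rw [h1, integral_comp_abs (f := fun x => x ^ 2 * rexp (-b * x ^ 2)),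
    aux_integral_sq_exp_Ioi b hb]
  ring

lemma aux_pdf_eq (v : ℝ≥0) :
    gaussianPDFReal 0 v = fun x =>
      (Real.sqrt (2 * π * v))⁻¹ * rexp (-(2*(v:ℝ))⁻¹ * x ^ 2) := by
  funext x
  rw [gaussianPDFReal]
  congr 1
  rw [sub_zero]
  congr 1
  field_simp

lemma aux_b_pos (v : ℝ≥0) (hv : v ≠ 0) : 0 < (2*(v:ℝ))⁻¹ := by
  have : 0 < (v:ℝ) := by positivity
  positivity

lemma aux_integrable_sq_gaussianReal (v : ℝ≥0) :
    Integrable (fun x : ℝ => x ^ 2) (gaussianReal 0 v) := by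
  by_cases hv : v = 0
  · subst hv
    rw [gaussianReal_zero_var]
    refine ⟨by fun_prop, ?_⟩
    simp [HasFiniteIntegral, lintegral_dirac]
  · rw [gaussianReal_of_var_ne_zero _ hv,
      integrable_withDensity_iff (measurable_gaussianPDF 0 v)
        (ae_of_all _ fun x => ENNReal.ofReal_lt_top)]
    have heq : (fun x : ℝ => x ^ 2 * (gaussianPDF 0 v x).toReal)
        = fun x => (Real.sqrt (2 * π * v))⁻¹ * (x ^ 2 * rexp (-(2*(v:ℝ))⁻¹ * x ^ 2)) := by
      funext x
      rw [gaussianPDF, ENNReal.toReal_ofReal (gaussianPDFReal_nonneg 0 v x), aux_pdf_eq v]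
      ring
    rw [heq]
    exact (aux_integrable_sq_exp _ (aux_b_pos v hv)).const_mul _

lemma aux_memLp_two_gaussianReal (v : ℝ≥0) :
    MemLp (id : ℝ → ℝ) 2 (gaussianReal 0 v) := by
  rw [memLp_two_iff_integrable_sq aestronglyMeasurable_id]
  exact aux_integrable_sq_gaussianReal v

lemma aux_integral_sq_gaussianReal (v : ℝ≥0) :
    ∫ x : ℝ, x ^ 2 ∂(gaussianReal 0 v) = v := by
  by_cases hv : v = 0
  · subst hv
    rw [gaussianReal_zero_var, integral_dirac]
    norm_num
  · set b := (2*(v:ℝ))⁻¹ with hbdef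
    have hb : 0 < b := aux_b_pos v hv
    have hv' : 0 < (v:ℝ) := by positivity
    have hwd : gaussianReal 0 v
        = volume.withDensity (fun x => ((gaussianPDFReal 0 v x).toNNReal : ℝ≥0∞)) := by
      rw [gaussianReal_of_var_ne_zero _ hv]
      rfl
    rw [hwd, integral_withDensity_eq_integral_smul
      ((measurable_gaussianPDFReal 0 v).real_toNNReal) (fun x => x ^ 2)]
    have heq : (fun x : ℝ => (gaussianPDFReal 0 v x).toNNReal • x ^ 2)
        = fun x => (Real.sqrt (2 * π * v))⁻¹ * (x ^ 2 * rexp (-b * x ^ 2)) := by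
      funext x
      rw [NNReal.smul_def, smul_eq_mul, Real.coe_toNNReal _ (gaussianPDFReal_nonneg 0 v x),
        aux_pdf_eq v]
      ring
    rw [heq, integral_const_mul, aux_integral_sq_exp b hb]
    have hπb : π / b = 2 * π * v := by
      rw [hbdef]; field_simp
    rw [hπb]
    have hs : 0 < Real.sqrt (2 * π * v) := by
      apply Real.sqrt_pos.2; positivity
    have h2b : (2*b)⁻¹ = v := by rw [hbdef]; field_simp
    field_simp [hbdef]
    rw [hbdef]; exact (mul_inv_cancel₀ (by positivity)).symm

lemma aux_integral_id_gaussianReal (v : ℝ≥0) :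
    ∫ x : ℝ, x ∂(gaussianReal 0 v) = 0 := by
  have hmap : (gaussianReal 0 v).map (fun x => (-1 : ℝ) * x) = gaussianReal 0 v := by
    rw [gaussianReal_map_const_mul (-1 : ℝ)]
    norm_num
  have hint : ∫ x : ℝ, x ∂(gaussianReal 0 v)
      = ∫ x : ℝ, (-1 : ℝ) * x ∂(gaussianReal 0 v) := by
    conv_lhs => rw [← hmap]
    rw [integral_map (f := fun x : ℝ => x) (φ := fun x : ℝ => (-1:ℝ) * x) (by fun_prop) aestronglyMeasurable_id]
  have h2 : ∫ x : ℝ, (-1 : ℝ) * x ∂(gaussianReal 0 v)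
      = - ∫ x : ℝ, x ∂(gaussianReal 0 v) := by
    rw [integral_const_mul]; ring
  linarith [hint, h2]

lemma aux_gaussian_Iio_pos' (y : ℝ) : 0 < gaussianReal 0 1 (Iio y) := by
  rw [gaussianReal_apply 0 one_ne_zero]
  rw [lintegral_pos_iff_support (measurable_gaussianPDF 0 1)]
  have hsupp : (Function.support fun x => gaussianPDF 0 1 x) = univ := by
    ext x
    simp only [Function.mem_support, mem_univ, iff_true]
    exact (gaussianPDF_pos 0 one_ne_zero x).ne'
  rw [hsupp]
  simp [Real.volume_Iio]

lemma aux_Ioc_sum_eq_range (f : ℕ → ℝ) (m : ℕ) :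
    ∑ i ∈ Finset.Ioc 0 m, f i = ∑ i ∈ Finset.range m, f (i + 1) := by
  induction m with
  | zero => simp
  | succ m ih =>
    rw [Finset.sum_Ioc_succ_top (Nat.zero_le _), ih, Finset.sum_range_succ]

lemma aux_abel (b : ℕ → ℝ) (M x : ℝ) (hM : 0 < M) (hx0 : 0 ≤ x) (hx1 : x ≤ 1) :
    ∀ n : ℕ, (∀ k, k ≤ n → ∑ i ∈ Finset.range k, b i < M) →
      ∑ i ∈ Finset.range n, b i * x ^ (i + 1)
        ≤ M * x - (M - ∑ i ∈ Finset.range n, b i) * x ^ (n + 1) := by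
  intro n
  induction n with
  | zero => simp
  | succ n ih =>
    intro h
    have hn : ∑ i ∈ Finset.range n, b i * x ^ (i+1)
        ≤ M * x - (M - ∑ i ∈ Finset.range n, b i) * x ^ (n + 1) :=
      ih (fun k hk => h k (Nat.le_succ_of_le hk))
    rw [Finset.sum_range_succ, Finset.sum_range_succ (f := b)]
    have hlt : ∑ i ∈ Finset.range (n+1), b i < M := h (n+1) le_rfl
    rw [Finset.sum_range_succ] at hlt
    have hpow : x ^ (n + 2) ≤ x ^ (n + 1) :=
      pow_le_pow_of_le_one hx0 hx1 (by omega)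
    have hnn : 0 ≤ M - (∑ i ∈ Finset.range n, b i + b n) := by linarith
    nlinarith [mul_le_mul_of_nonneg_left hpow hnn]

lemma aux_abel' (b : ℕ → ℝ) (M x : ℝ) (hM : 0 < M) (hx0 : 0 ≤ x) (hx1 : x ≤ 1)
    (n : ℕ) (h : ∀ k, k ≤ n → ∑ i ∈ Finset.range k, b i < M) :
    ∑ i ∈ Finset.range n, b i * x ^ (i + 1) ≤ M := by
  have h1 := aux_abel b M x hM hx0 hx1 n h
  have h2 : 0 ≤ (M - ∑ i ∈ Finset.range n, b i) * x ^ (n + 1) := by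
    have := h n le_rfl
    have : 0 ≤ M - ∑ i ∈ Finset.range n, b i := by linarith
    positivity
  have h3 : M * x ≤ M := by nlinarith
  linarith

lemma aux_indep_ext {Ω : Type*} [MeasurableSpace Ω] (μ : Measure Ω)
    (a : ℕ → Ω → ℝ) (hmeas : ∀ i, Measurable (a i))
    (hindep : iIndepFun a μ)
    (S T : Finset ℕ) (hST : Disjoint S T) :
    IndepFun (fun ω (i : ℕ) => if i ∈ S then a i ω else 0)
      (fun ω (i : ℕ) => if i ∈ T then a i ω else 0) μ := by
  have h := hindep.indepFun_finset S T hST hmeas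
  have hφ : ∀ (F : Finset ℕ), Measurable (fun (v : ↥F → ℝ) (i : ℕ) =>
      if h : i ∈ F then v ⟨i, h⟩ else 0) := by
    intro F
    apply measurable_pi_lambda
    intro i
    by_cases h : i ∈ F
    · simpa [h] using measurable_pi_apply (⟨i, h⟩ : ↥F)
    · simpa [h] using measurable_const
  have h2 := h.comp (hφ S) (hφ T)
  have heqS : ((fun (v : ↥S → ℝ) (i : ℕ) => if h : i ∈ S then v ⟨i, h⟩ else 0)
      ∘ (fun ω (i : ↥S) => a i ω)) = fun ω (i : ℕ) => if i ∈ S then a i ω else 0 := by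
    funext ω i
    by_cases h : i ∈ S <;> simp [h]
  have heqT : ((fun (v : ↥T → ℝ) (i : ℕ) => if h : i ∈ T then v ⟨i, h⟩ else 0)
      ∘ (fun ω (i : ↥T) => a i ω)) = fun ω (i : ℕ) => if i ∈ T then a i ω else 0 := by
    funext ω i
    by_cases h : i ∈ T <;> simp [h]
  rwa [heqS, heqT] at h2

lemma aux_meas_psum (j : ℕ) :
    Measurable (fun v : ℕ → ℝ => ∑ i ∈ Finset.range j, v (i+1)) :=
  Finset.measurable_sum _ (fun i _ => measurable_pi_apply (i+1))

lemma aux_meas_fsum (T : Finset ℕ) :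
    Measurable (fun v : ℕ → ℝ => ∑ i ∈ T, v i) :=
  Finset.measurable_sum _ (fun i _ => measurable_pi_apply i)

end AuxLemmas

open scoped NNReal ENNReal

/-- If `∑_{i ≥ 1} L(i) i^α` converges, then the probability that the random polynomial
`Q_n` (with independent centered Gaussian coefficients of variances `E[a_0²] = 1`,
`E[a_i²] = i^α L(i)`) is negative on all of `[0,1]` is bounded away from zero in `n`. -/
theorem persistence_zero_one_bounded_away
    (α : ℝ) (L : ℝ → ℝ) (hLpos : ∀ x > (0:ℝ), 0 < L x)
    (hsum : Summable (fun i : ℕ => L (i + 1) * ((i : ℝ) + 1) ^ α))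
    (Ω : Type*) [MeasurableSpace Ω] (μ : Measure Ω) [IsProbabilityMeasure μ]
    (a : ℕ → Ω → ℝ) (hmeas : ∀ i, Measurable (a i))
    (hindep : iIndepFun a μ)
    (σ : ℕ → NNReal) (hσ0 : (σ 0 : ℝ) = 1)
    (hσ : ∀ i : ℕ, 1 ≤ i → (σ i : ℝ) = (i : ℝ) ^ α * L i)
    (hgauss : ∀ i, Measure.map (a i) μ = gaussianReal 0 (σ i)) :
    ∃ c : ℝ, 0 < c ∧ ∀ n : ℕ, 1 ≤ n →
      c ≤ (μ {ω | ∀ x ∈ Icc (0:ℝ) 1,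
            (∑ i ∈ Finset.range (n + 1), a i ω * x ^ i) < 0}).toReal := by
  classical
  have hσ1 : σ 0 = 1 := by
    apply NNReal.coe_injective; rw [hσ0, NNReal.coe_one]
  -- summability of variances
  have hsum' : Summable (fun i : ℕ => ((σ (i+1) : ℝ))) := by
    refine hsum.congr fun i => ?_
    rw [hσ (i+1) (by omega)]
    push_cast
    ring
  set V : ℝ := ∑' i : ℕ, ((σ (i+1) : ℝ)) with hVdef
  have hV0 : 0 ≤ V := tsum_nonneg (fun i => (σ (i+1)).coe_nonneg)
  set γ : ℝ := Real.sqrt (2*V) + 1 with hγdef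
  have hγpos : 0 < γ := by positivity
  set M : ℝ := γ + (Real.sqrt (8*V) + 1) with hMdef
  have hMγ : M - γ = Real.sqrt (8*V) + 1 := by rw [hMdef]; ring
  have hMγpos : 0 < M - γ := by rw [hMγ]; positivity
  have hMpos : 0 < M := by linarith
  -- per-coordinate facts
  have haem : ∀ i, AEMeasurable (a i) μ := fun i => (hmeas i).aemeasurable
  have hmlp : ∀ i, MemLp (a i) 2 μ := by
    intro i
    have h := aux_memLp_two_gaussianReal (σ i)
    rw [← hgauss i] at h
    have h2 := (memLp_map_measure_iff aestronglyMeasurable_id (haem i)).mp h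
    simpa [Function.comp] using h2
  have hmean : ∀ i, ∫ ω, a i ω ∂μ = 0 := by
    intro i
    have h : ∫ x : ℝ, x ∂(Measure.map (a i) μ) = 0 := by
      rw [hgauss i]; exact aux_integral_id_gaussianReal _
    rwa [integral_map (f := fun x : ℝ => x) (haem i)
      measurable_id.aestronglyMeasurable] at h
  have hsqm : ∀ i, ∫ ω, (a i ω) ^ 2 ∂μ = (σ i : ℝ) := by
    intro i
    have h : ∫ x : ℝ, x ^ 2 ∂(Measure.map (a i) μ) = (σ i : ℝ) := by
      rw [hgauss i]; exact aux_integral_sq_gaussianReal _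
    rwa [integral_map (haem i) (by fun_prop)] at h
  have hvar : ∀ i, variance (a i) μ = (σ i : ℝ) := by
    intro i
    rw [variance_eq_sub (hmlp i)]
    have h1 : μ[(a i) ^ 2] = (σ i : ℝ) := by
      rw [← hsqm i]; congr 1
    have h2 : μ[a i] = 0 := hmean i
    rw [h1, h2]; ring
  -- finset-level facts
  have hmlpF : ∀ F : Finset ℕ, MemLp (∑ i ∈ F, a i) 2 μ :=
    fun F => memLp_finset_sum' F (fun i _ => hmlp i)
  have hmeanF : ∀ F : Finset ℕ, μ[∑ i ∈ F, a i] = 0 := by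
    intro F
    have : ∫ ω, (∑ i ∈ F, a i) ω ∂μ = ∫ ω, ∑ i ∈ F, a i ω ∂μ := by
      congr 1; funext ω; simp [Finset.sum_apply]
    rw [this, integral_finset_sum F (fun i _ => (hmlp i).integrable one_le_two)]
    simp [hmean]
  have hsumσ : ∀ F : Finset ℕ, 0 ∉ F → ∑ i ∈ F, (σ i : ℝ) ≤ V := by
    intro F hF
    have himg : ∑ j ∈ F.image (· - 1), ((σ (j+1) : ℝ)) = ∑ i ∈ F, (σ i : ℝ) := by
      rw [Finset.sum_image]
      · apply Finset.sum_congr rfl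
        intro i hi
        have : 1 ≤ i := by
          rcases Nat.eq_zero_or_pos i with h | h
          · exact absurd (h ▸ hi) hF
          · omega
        have h1 : i - 1 + 1 = i := by omega
        rw [h1]
      · intro i hi j hj hij
        have hi1 : 1 ≤ i := by
          rcases Nat.eq_zero_or_pos i with h | h
          · exact absurd (h ▸ hi) hF
          · omega
        have hj1 : 1 ≤ j := by
          rcases Nat.eq_zero_or_pos j with h | h
          · exact absurd (h ▸ hj) hF
          · omega
        simp only at hij
        omega
    rw [← himg]
    exact Summable.sum_le_tsum _ (fun j _ => (σ (j+1)).coe_nonneg) hsum'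
  have hvarF : ∀ F : Finset ℕ, 0 ∉ F → variance (∑ i ∈ F, a i) μ ≤ V := by
    intro F hF
    rw [IndepFun.variance_sum (fun i _ => hmlp i)
      (fun i _ j _ hij => hindep.indepFun hij)]
    calc ∑ i ∈ F, variance (a i) μ = ∑ i ∈ F, (σ i : ℝ) := by
          apply Finset.sum_congr rfl; intro i _; exact hvar i
      _ ≤ V := hsumσ F hF
  -- Chebyshev
  have cheb : ∀ (F : Finset ℕ), 0 ∉ F → ∀ t : ℝ, 0 < t →
      μ {ω | t ≤ |∑ i ∈ F, a i ω|} ≤ ENNReal.ofReal (V / t^2) := by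
    intro F hF t ht
    have h := meas_ge_le_variance_div_sq (hmlpF F) ht
    rw [hmeanF F] at h
    have hset : {ω | t ≤ |∑ i ∈ F, a i ω|}
        = {ω | t ≤ |(∑ i ∈ F, a i) ω - 0|} := by
      ext ω; simp [Finset.sum_apply]
    rw [hset]
    refine h.trans (ENNReal.ofReal_le_ofReal ?_)
    gcongr
    exact hvarF F hF
  clear_value V γ M
  -- partial sums
  set sps : ℕ → Ω → ℝ := fun k ω => ∑ i ∈ Finset.Ioc 0 k, a i ω with hspsdef
  have hsps_range : ∀ k ω, sps k ω = ∑ i ∈ Finset.range k, a (i+1) ω :=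
    fun k ω => aux_Ioc_sum_eq_range _ k
  have hsps_meas : ∀ k, Measurable (sps k) := by
    intro k; apply Finset.measurable_sum; intro i _; exact hmeas i

  -- the constant
  refine ⟨(gaussianReal 0 1 (Iio (-M))).toReal / 2, ?_, ?_⟩
  · have hpos := aux_gaussian_Iio_pos' (-M)
    have hne : gaussianReal 0 1 (Iio (-M)) ≠ ⊤ := measure_ne_top _ _
    have h := ENNReal.toReal_pos hpos.ne' hne
    linarith
  intro n hn
  set uf : Finset ℕ → Ω → ℕ → ℝ := fun F ω i => if i ∈ F then a i ω else 0 with hufdef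
  have hukey : ∀ (F : Finset ℕ) (k : ℕ) (ω : Ω), (∀ i, i < k → (i+1) ∈ F) →
      ∑ i ∈ Finset.range k, uf F ω (i+1) = sps k ω := by
    intro F k ω hF
    rw [hsps_range]
    apply Finset.sum_congr rfl
    intro i hi
    rw [Finset.mem_range] at hi
    simp [hufdef, hF i hi]
  set E : ℕ → Set Ω := fun k => {ω | (∀ j, j < k → sps j ω < M) ∧ M ≤ sps k ω} with hEdef
  set D : ℕ → Set Ω := fun k => {ω | -γ ≤ ∑ i ∈ Finset.Ioc k n, a i ω} with hDdef
  have hEmeas : ∀ k, MeasurableSet (E k) := by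
    intro k
    have h : E k = (⋂ j ∈ Finset.range k, {ω | sps j ω < M}) ∩ {ω | M ≤ sps k ω} := by
      ext ω
      simp [hEdef, Finset.mem_range]
    rw [h]
    exact (MeasurableSet.biInter (Finset.range k).countable_toSet
      (fun j _ => measurableSet_lt (hsps_meas j) measurable_const)).inter
      (measurableSet_le measurable_const (hsps_meas k))
  have hDmeas : ∀ k, MeasurableSet (D k) :=
    fun k => measurableSet_le measurable_const (Finset.measurable_sum _ (fun i _ => hmeas i))
  have hprod : ∀ k, 1 ≤ k → k ≤ n → μ (E k ∩ D k) = μ (E k) * μ (D k) := by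
    intro k hk1 hkn
    have hdisj : Disjoint (Finset.Ioc 0 k) (Finset.Ioc k n) := by
      rw [Finset.disjoint_left]
      intro i hi hi'
      rw [Finset.mem_Ioc] at hi hi'
      omega
    have hIF := aux_indep_ext μ a hmeas hindep _ _ hdisj
    set BS : Set (ℕ → ℝ) := {v | (∀ j, j < k → ∑ i ∈ Finset.range j, v (i+1) < M)
      ∧ M ≤ ∑ i ∈ Finset.range k, v (i+1)} with hBSdef
    have hBSmeas : MeasurableSet BS := by
      have h : BS = (⋂ j ∈ Finset.range k,
          (fun v : ℕ → ℝ => ∑ i ∈ Finset.range j, v (i+1)) ⁻¹' (Iio M))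
          ∩ ((fun v : ℕ → ℝ => ∑ i ∈ Finset.range k, v (i+1)) ⁻¹' (Ici M)) := by
        ext v
        simp [hBSdef, Finset.mem_range]
      rw [h]
      exact (MeasurableSet.biInter (Finset.range k).countable_toSet
        (fun j _ => (aux_meas_psum j) measurableSet_Iio)).inter
        ((aux_meas_psum k) measurableSet_Ici)
    have hEeq : E k = (uf (Finset.Ioc 0 k)) ⁻¹' BS := by
      ext ω
      have hkey : ∀ j, j ≤ k → ∑ i ∈ Finset.range j, uf (Finset.Ioc 0 k) ω (i+1) = sps j ω := by
        intro j hj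
        apply hukey
        intro i hi
        rw [Finset.mem_Ioc]
        omega
      simp only [hEdef, mem_preimage, hBSdef, mem_setOf_eq]
      constructor
      · rintro ⟨h1, h2⟩
        exact ⟨fun j hj => by rw [hkey j hj.le]; exact h1 j hj,
          by rw [hkey k le_rfl]; exact h2⟩
      · rintro ⟨h1, h2⟩
        exact ⟨fun j hj => by rw [← hkey j hj.le]; exact h1 j hj,
          by rw [← hkey k le_rfl]; exact h2⟩
    have hDeq : D k = (uf (Finset.Ioc k n)) ⁻¹'
        ((fun v : ℕ → ℝ => ∑ i ∈ Finset.Ioc k n, v i) ⁻¹' (Ici (-γ))) := by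
      ext ω
      have h : ∑ i ∈ Finset.Ioc k n, uf (Finset.Ioc k n) ω i
          = ∑ i ∈ Finset.Ioc k n, a i ω := by
        apply Finset.sum_congr rfl
        intro i hi
        simp [hufdef, hi]
      simp only [hDdef, mem_preimage, mem_setOf_eq, mem_Ici]
      rw [h]
    rw [hEeq, hDeq]
    exact hIF.measure_inter_preimage_eq_mul _ _ hBSmeas
      ((aux_meas_fsum _) measurableSet_Ici)
  have hhalf : (1:ℝ≥0∞)/2 = ENNReal.ofReal (1/2) := by
    rw [ENNReal.ofReal_div_of_pos (by norm_num), ENNReal.ofReal_one, ENNReal.ofReal_ofNat]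
  have hDk : ∀ k, 1 ≤ k → k ≤ n → (1:ℝ≥0∞)/2 ≤ μ (D k) := by
    intro k hk1 hkn
    have h0T : (0:ℕ) ∉ Finset.Ioc k n := by simp
    have hsub : (D k)ᶜ ⊆ {ω | γ ≤ |∑ i ∈ Finset.Ioc k n, a i ω|} := by
      intro ω hω
      simp only [hDdef, mem_compl_iff, mem_setOf_eq, not_le] at hω
      simp only [mem_setOf_eq]
      rw [le_abs]
      right
      linarith
    have h1 : μ ((D k)ᶜ) ≤ ENNReal.ofReal (V / γ^2) :=
      (measure_mono hsub).trans (cheb _ h0T γ hγpos)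
    have h2 : V / γ^2 ≤ 1/2 := by
      rw [div_le_iff₀ (pow_pos hγpos 2)]
      have hs : Real.sqrt (2*V) ^ 2 = 2*V := Real.sq_sqrt (by linarith)
      have h2V : 2*V ≤ γ^2 := by
        rw [hγdef]
        nlinarith [Real.sqrt_nonneg (2*V)]
      linarith
    have h3 : μ ((D k)ᶜ) ≤ 1/2 := by
      rw [hhalf]
      exact h1.trans (ENNReal.ofReal_le_ofReal h2)
    by_contra hlt
    push_neg at hlt
    have hsum1 : μ (D k) + μ ((D k)ᶜ) = 1 := by
      rw [measure_add_measure_compl (hDmeas k), measure_univ]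
    have hcontr : (1:ℝ≥0∞) < 1 := by
      calc (1:ℝ≥0∞) = μ (D k) + μ ((D k)ᶜ) := hsum1.symm
        _ ≤ μ (D k) + 1/2 := by gcongr
        _ < 1/2 + 1/2 := by
            exact ENNReal.add_lt_add_right (by norm_num) hlt
        _ = 1 := ENNReal.add_halves 1
    exact absurd hcontr (lt_irrefl _)
  have htwo : (2:ℝ≥0∞) * (1/2) = 1 := by
    rw [one_div, ENNReal.mul_inv_cancel (by norm_num) (by norm_num)]
  have hEE : ∀ k ∈ Finset.Icc 1 n, μ (E k) ≤ 2 * μ (E k ∩ D k) := by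
    intro k hk
    rw [Finset.mem_Icc] at hk
    calc μ (E k) = μ (E k) * 1 := (mul_one _).symm
      _ = μ (E k) * (2 * (1/2)) := by rw [htwo]
      _ ≤ μ (E k) * (2 * μ (D k)) :=
          mul_le_mul_right (mul_le_mul_right (hDk k hk.1 hk.2) 2) _
      _ = 2 * (μ (E k) * μ (D k)) := by ring
      _ = 2 * μ (E k ∩ D k) := by rw [hprod k hk.1 hk.2]
  have hEdisj : ∀ k k', k < k' → ∀ ω, ω ∈ E k → ω ∉ E k' := by
    intro k k' hkk ω h1 h2
    exact absurd h1.2 (not_le.2 (h2.1 k hkk))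
  have hpd : (↑(Finset.Icc 1 n) : Set ℕ).PairwiseDisjoint (fun k => E k ∩ D k) := by
    intro k _ k' _ hne
    rcases lt_or_gt_of_ne hne with h | h
    · exact Set.disjoint_left.2 (fun ω hω hω' => hEdisj k k' h ω hω.1 hω'.1)
    · exact Set.disjoint_right.2 (fun ω hω hω' => hEdisj k' k h ω hω.1 hω'.1)
  have hsub2 : (⋃ k ∈ Finset.Icc 1 n, E k ∩ D k)
      ⊆ {ω | M - γ ≤ |∑ i ∈ Finset.Ioc 0 n, a i ω|} := by
    intro ω hω
    rw [mem_iUnion₂] at hω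
    obtain ⟨k, hk, hωk⟩ := hω
    rw [Finset.mem_Icc] at hk
    have hsplit : sps k ω + ∑ i ∈ Finset.Ioc k n, a i ω = sps n ω :=
      Finset.sum_Ioc_consecutive _ (Nat.zero_le k) hk.2
    have h1 : M ≤ sps k ω := hωk.1.2
    have h2 : -γ ≤ ∑ i ∈ Finset.Ioc k n, a i ω := hωk.2
    simp only [mem_setOf_eq]
    rw [le_abs]
    left
    have hrfl : sps n ω = ∑ i ∈ Finset.Ioc 0 n, a i ω := rfl
    linarith
  have hUbound : μ (⋃ k ∈ Finset.Icc 1 n, E k) ≤ 1/2 := by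
    have hG : μ {ω | M - γ ≤ |∑ i ∈ Finset.Ioc 0 n, a i ω|} ≤ ENNReal.ofReal (1/8) := by
      refine (cheb _ (by simp) (M - γ) hMγpos).trans (ENNReal.ofReal_le_ofReal ?_)
      rw [div_le_iff₀ (pow_pos hMγpos 2)]
      have hs : Real.sqrt (8*V) ^ 2 = 8*V := Real.sq_sqrt (by linarith)
      have h8 : 8*V ≤ (M-γ)^2 := by
        rw [hMγ]
        nlinarith [Real.sqrt_nonneg (8*V)]
      linarith
    have hc5 : (2:ℝ≥0∞) * ENNReal.ofReal (1/8) ≤ 1/2 := by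
      have h24 : ENNReal.ofReal ((2:ℝ) * (1/8)) = (2:ℝ≥0∞) * ENNReal.ofReal (1/8) := by
        rw [ENNReal.ofReal_mul (by norm_num), ENNReal.ofReal_ofNat]
      rw [← h24, hhalf]
      exact ENNReal.ofReal_le_ofReal (by norm_num)
    calc μ (⋃ k ∈ Finset.Icc 1 n, E k) ≤ ∑ k ∈ Finset.Icc 1 n, μ (E k) :=
        measure_biUnion_finset_le _ _
      _ ≤ ∑ k ∈ Finset.Icc 1 n, 2 * μ (E k ∩ D k) := Finset.sum_le_sum hEE
      _ = 2 * μ (⋃ k ∈ Finset.Icc 1 n, E k ∩ D k) := by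
          rw [← Finset.mul_sum,
            measure_biUnion_finset hpd (fun k _ => (hEmeas k).inter (hDmeas k))]
      _ ≤ 2 * ENNReal.ofReal (1/8) :=
          mul_le_mul_right ((measure_mono hsub2).trans hG) 2
      _ ≤ 1/2 := hc5
  set Bev : Set Ω := {ω | ∀ k, k ≤ n → sps k ω < M} with hBevdef
  have hcompl : (⋃ k ∈ Finset.Icc 1 n, E k)ᶜ ⊆ Bev := by
    intro ω hω
    simp only [mem_compl_iff, mem_iUnion₂, not_exists] at hω
    have hall : ∀ k, k ≤ n → sps k ω < M := by
      intro k
      induction k using Nat.strong_induction_on with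
      | _ k ih =>
        intro hk
        by_contra hMk
        push_neg at hMk
        have hk1 : 1 ≤ k := by
          by_contra h0
          push_neg at h0
          have hk0 : k = 0 := by omega
          subst hk0
          have h00 : sps 0 ω = 0 := by simp [hspsdef]
          rw [h00] at hMk
          linarith
        have hEk : ω ∈ E k := ⟨fun j hj => ih j hj (le_trans hj.le hk), hMk⟩
        exact hω k (Finset.mem_Icc.2 ⟨hk1, hk⟩) hEk
    exact hall
  have hBev2 : (1:ℝ≥0∞)/2 ≤ μ Bev := by
    have hUmeas : MeasurableSet (⋃ k ∈ Finset.Icc 1 n, E k) :=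
      (Finset.Icc 1 n).measurableSet_biUnion (fun k _ => hEmeas k)
    have h1 : μ ((⋃ k ∈ Finset.Icc 1 n, E k)ᶜ) ≤ μ Bev := measure_mono hcompl
    rw [measure_compl hUmeas (measure_ne_top _ _), measure_univ] at h1
    have h2 : (1:ℝ≥0∞)/2 ≤ 1 - μ (⋃ k ∈ Finset.Icc 1 n, E k) := by
      have h3 := tsub_le_tsub_left hUbound (1:ℝ≥0∞)
      have h4 : (1:ℝ≥0∞) - 1/2 = 1/2 := by
        rw [ENNReal.sub_half ENNReal.one_ne_top]
      rwa [h4] at h3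
    exact h2.trans h1
  set Aev : Set Ω := (a 0) ⁻¹' (Iio (-M)) with hAdef
  have hdisj0 : Disjoint ({0} : Finset ℕ) (Finset.Ioc 0 n) := by
    rw [Finset.disjoint_left]
    intro i hi hi'
    rw [Finset.mem_singleton] at hi
    rw [Finset.mem_Ioc] at hi'
    omega
  have hIF0 := aux_indep_ext μ a hmeas hindep _ _ hdisj0
  set BSn : Set (ℕ → ℝ) := {v | ∀ k, k ≤ n → ∑ i ∈ Finset.range k, v (i+1) < M}
    with hBSndef
  have hBSnmeas : MeasurableSet BSn := by
    have h : BSn = ⋂ k ∈ Finset.range (n+1),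
        (fun v : ℕ → ℝ => ∑ i ∈ Finset.range k, v (i+1)) ⁻¹' (Iio M) := by
      ext v
      simp [hBSndef, Finset.mem_range, Nat.lt_succ_iff]
    rw [h]
    exact MeasurableSet.biInter (Finset.range (n+1)).countable_toSet
      (fun k _ => (aux_meas_psum k) measurableSet_Iio)
  have hAeq : Aev = (uf {0}) ⁻¹' ((fun v : ℕ → ℝ => v 0) ⁻¹' (Iio (-M))) := by
    ext ω
    simp [hAdef, hufdef]
  have hBeveq : Bev = (uf (Finset.Ioc 0 n)) ⁻¹' BSn := by
    ext ω
    have hkey : ∀ j, j ≤ n →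
        ∑ i ∈ Finset.range j, uf (Finset.Ioc 0 n) ω (i+1) = sps j ω := by
      intro j hj
      apply hukey
      intro i hi
      rw [Finset.mem_Ioc]
      omega
    simp only [hBevdef, mem_preimage, hBSndef, mem_setOf_eq]
    constructor
    · intro h j hj
      rw [hkey j hj]
      exact h j hj
    · intro h j hj
      rw [← hkey j hj]
      exact h j hj
  have hprod0 : μ (Aev ∩ Bev) = μ Aev * μ Bev := by
    rw [hAeq, hBeveq]
    exact hIF0.measure_inter_preimage_eq_mul _ _
      ((measurable_pi_apply 0) measurableSet_Iio) hBSnmeas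
  have hAval : μ Aev = gaussianReal 0 1 (Iio (-M)) := by
    rw [hAdef, ← Measure.map_apply (hmeas 0) measurableSet_Iio, hgauss 0, hσ1]
  have hincl : Aev ∩ Bev ⊆ {ω | ∀ x ∈ Icc (0:ℝ) 1,
      (∑ i ∈ Finset.range (n + 1), a i ω * x ^ i) < 0} := by
    rintro ω ⟨hA, hB⟩ x hx
    obtain ⟨hx0, hx1⟩ := hx
    have hsplit : ∑ i ∈ Finset.range (n+1), a i ω * x ^ i
        = a 0 ω + ∑ i ∈ Finset.range n, a (i+1) ω * x ^ (i+1) := by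
      rw [Finset.sum_range_succ' (fun i => a i ω * x ^ i) n]
      simp [add_comm]
    have hub : ∑ i ∈ Finset.range n, a (i+1) ω * x ^ (i+1) ≤ M := by
      apply aux_abel' _ M x hMpos hx0 hx1 n
      intro k hk
      rw [← hsps_range]
      exact hB k hk
    have hA' : a 0 ω < -M := hA
    rw [hsplit]
    linarith
  have hfinal : μ Aev * (1/2) ≤ μ {ω | ∀ x ∈ Icc (0:ℝ) 1,
      (∑ i ∈ Finset.range (n + 1), a i ω * x ^ i) < 0} := by
    calc μ Aev * (1/2) ≤ μ Aev * μ Bev := mul_le_mul_right hBev2 _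
      _ = μ (Aev ∩ Bev) := hprod0.symm
      _ ≤ _ := measure_mono hincl
  have hne2 : μ {ω | ∀ x ∈ Icc (0:ℝ) 1,
      (∑ i ∈ Finset.range (n + 1), a i ω * x ^ i) < 0} ≠ ⊤ := measure_ne_top _ _
  have hmono := ENNReal.toReal_mono hne2 hfinal
  rw [ENNReal.toReal_mul, hAval] at hmono
  have hhalfR : ((1:ℝ≥0∞)/2).toReal = 1/2 := by
    rw [ENNReal.toReal_div]
    simp
  rw [hhalfR] at hmono
  linarith
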